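/- Let μ, β > 0, let x̄ ∈ E, r > 0, and let Π : E → E be such that for every y ∈ B(x̄, r): Π(y) ∈ X, ‖y − Π(y)‖ = infDist(y, X), and the function w ↦ d(w)² is differentiable at y with gradient 2·(y − Π(y)). Let f be differentiable. If x_μ ∈ B(x̄, r) is a local minimizer of the exterior-point minimization function f + ι̂_μ, then ∇f(x_μ) + β·x_μ + (1/μ)·(x_μ − Π(x_μ)) = 0; equivalently, x_μ = (1/(βμ + 1))·(Π(x_μ) − μ·∇f(x_μ)). -/

import Mathlib

/-!
At a local minimizer the gradient of `f + ι̂_μ` vanishes (Fermat's rule). The gradient of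
`d² / (2μ)` is `(1/μ)(y − Π y)` by hypothesis and that of `(β/2)‖y‖²` is `β y`, which gives the
stationarity equation; multiplying it by `μ` and solving the resulting linear equation for `x_μ`
gives the fixed-point form.
-/

open InnerProductSpace Metric

section Gradient

variable {F : Type*} [NormedAddCommGroup F] [InnerProductSpace ℝ F] [CompleteSpace F]
  {f g : F → ℝ} {f' g' x : F}

theorem HasGradientAt.add (hf : HasGradientAt f f' x) (hg : HasGradientAt g g' x) :
    HasGradientAt (fun y => f y + g y) (f' + g') x := by
  rw [hasGradientAt_iff_hasFDerivAt, map_add]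
  exact hf.hasFDerivAt.add hg.hasFDerivAt

theorem HasGradientAt.const_mul (c : ℝ) (hf : HasGradientAt f f' x) :
    HasGradientAt (fun y => c * f y) (c • f') x := by
  rw [hasGradientAt_iff_hasFDerivAt, map_smul]
  exact hf.hasFDerivAt.const_mul c

theorem HasGradientAt.div_const (hf : HasGradientAt f f' x) (c : ℝ) :
    HasGradientAt (fun y => f y / c) (c⁻¹ • f') x := by
  simpa only [div_eq_inv_mul] using hf.const_mul c⁻¹

theorem hasGradientAt_norm_sq (x : F) : HasGradientAt (fun y => ‖y‖ ^ 2) ((2 : ℝ) • x) x := by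
  rw [hasGradientAt_iff_hasFDerivAt, map_smul, ofNat_smul_eq_nsmul (R := ℝ)]
  exact (hasStrictFDerivAt_norm_sq x).hasFDerivAt

theorem IsLocalMin.hasGradientAt_eq_zero (h : IsLocalMin f x) (hf : HasGradientAt f f' x) :
    f' = 0 :=
  (toDual ℝ F).map_eq_zero_iff.mp (h.hasFDerivAt_eq_zero hf)

end Gradient

theorem eq_smul_sub_smul_of_add_smul_add_smul_sub_eq_zero {K V : Type*} [Field K]
    [AddCommGroup V] [Module K V] {g x p : V} {μ β : K} (hμ : μ ≠ 0) (hβμ : β * μ + 1 ≠ 0)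
    (h : g + β • x + (1 / μ) • (x - p) = 0) :
    x = (1 / (β * μ + 1)) • (p - μ • g) := by
  have hlin : (β * μ + 1) • x = p - μ • g := by
    have hμh := congrArg (μ • ·) h
    simp only [smul_add, smul_smul, smul_zero, mul_one_div_cancel hμ, one_smul] at hμh
    linear_combination (norm := module) hμh
  rw [← hlin, smul_smul, one_div_mul_cancel hβμ, one_smul]

noncomputable def exteriorPenalty {E : Type*} [NormedAddCommGroup E] (X : Set E) (μ β : ℝ)
    (w : E) : ℝ :=
  infDist w X ^ 2 / (2 * μ) + β / 2 * ‖w‖ ^ 2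

theorem hasGradientAt_exteriorPenalty {E : Type*} [NormedAddCommGroup E] [InnerProductSpace ℝ E]
    [CompleteSpace E] {X : Set E} {μ : ℝ} (β : ℝ) {y p : E} (hμ : μ ≠ 0)
    (hd : HasGradientAt (fun w => infDist w X ^ 2) ((2 : ℝ) • (y - p)) y) :
    HasGradientAt (exteriorPenalty X μ β) (β • y + (1 / μ) • (y - p)) y := by
  have h := (hd.div_const (2 * μ)).add ((hasGradientAt_norm_sq y).const_mul (β / 2))
  rw [smul_smul, smul_smul, add_comm] at h
  unfold exteriorPenalty
  convert h using 3 <;> field_simp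

theorem nexos_first_order_optimality_general
    {E : Type*} [NormedAddCommGroup E] [InnerProductSpace ℝ E] [FiniteDimensional ℝ E]
    (X : Set E)
    (f : E → ℝ) (f' : E → E)
    (hgrad : ∀ x, HasGradientAt f (f' x) x)
    (μ β : ℝ) (hμ : 0 < μ) (hβ : 0 < β)
    (xbar : E) (r : ℝ)
    (proj : E → E)
    (hd2 : ∀ y ∈ Metric.ball xbar r,
      HasGradientAt (fun w => (Metric.infDist w X) ^ 2) ((2 : ℝ) • (y - proj y)) y)
    (xμ : E) (hxμ : xμ ∈ Metric.ball xbar r)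
    (hloc : IsLocalMin
      (fun w => f w + (Metric.infDist w X) ^ 2 / (2 * μ) + β / 2 * ‖w‖ ^ 2) xμ) :
    f' xμ + β • xμ + (1 / μ) • (xμ - proj xμ) = 0 ∧
    xμ = (1 / (β * μ + 1)) • (proj xμ - μ • f' xμ) := by
  have hobj : HasGradientAt (fun w => f w + exteriorPenalty X μ β w)
      (f' xμ + (β • xμ + (1 / μ) • (xμ - proj xμ))) xμ :=
    (hgrad xμ).add (hasGradientAt_exteriorPenalty β hμ.ne' (hd2 xμ hxμ))
  have hstat : f' xμ + β • xμ + (1 / μ) • (xμ - proj xμ) = 0 := by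
    rw [add_assoc]
    refine IsLocalMin.hasGradientAt_eq_zero ?_ hobj
    simpa only [exteriorPenalty, add_assoc] using hloc
  exact ⟨hstat, eq_smul_sub_smul_of_add_smul_add_smul_sub_eq_zero hμ.ne' (by positivity) hstat⟩

/-- First-order optimality condition for a local minimizer `xμ`
of the exterior-point minimization function `f + ι̂_μ`:
`∇f(xμ) + β·xμ + (1/μ)(xμ − Π(xμ)) = 0`, equivalently
`xμ = (1/(βμ+1))(Π(xμ) − μ∇f(xμ))`. -/
theorem nexos_first_order_optimality
    {E : Type*} [NormedAddCommGroup E] [InnerProductSpace ℝ E] [FiniteDimensional ℝ E]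
    (X : Set E) (hXne : X.Nonempty) (hXcl : IsClosed X)
    (f : E → ℝ) (f' : E → E)
    (hgrad : ∀ x, HasGradientAt f (f' x) x)
    (μ β : ℝ) (hμ : 0 < μ) (hβ : 0 < β)
    (xbar : E) (r : ℝ) (hr : 0 < r)
    (proj : E → E)
    (hproj : ∀ y ∈ Metric.ball xbar r,
      proj y ∈ X ∧ ‖y - proj y‖ = Metric.infDist y X)
    (hd2 : ∀ y ∈ Metric.ball xbar r,
      HasGradientAt (fun w => (Metric.infDist w X) ^ 2) ((2 : ℝ) • (y - proj y)) y)
    (xμ : E) (hxμ : xμ ∈ Metric.ball xbar r)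
    (hloc : IsLocalMin
      (fun w => f w + (Metric.infDist w X) ^ 2 / (2 * μ) + β / 2 * ‖w‖ ^ 2) xμ) :
    f' xμ + β • xμ + (1 / μ) • (xμ - proj xμ) = 0 ∧
    xμ = (1 / (β * μ + 1)) • (proj xμ - μ • f' xμ) :=
  nexos_first_order_optimality_general X f f' hgrad μ β hμ hβ xbar r proj hd2 xμ hxμ hloc
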